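/- arXiv:1407.1662 — 2 statements merged into one kernel-verified Lean document; each statement's English description precedes it below -/
import Mathlib

section
/- Let q ≥ 1, J a symmetric q×q real matrix, and W a bounded graphon. Then for any two probability distributions a, b on [q], the microcanonical ground state energies satisfy |E_a(W,J) − E_b(W,J)| ≤ 2·‖a − b‖₁·‖W‖_∞·‖J‖_∞, where ‖a − b‖₁ = Σ_i |a_i − b_i|. -/
open MeasureTheory Filter

noncomputable section

/-- The unit interval as a subset of ℝ. -/
def I01 : Set ℝ := Set.Icc 0 1

/-- A `q`-fractional partition: measurable functions `ρ i : [0,1] → [0,1]`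
summing pointwise to `1` on `[0,1]`. -/
structure FracPartition (q : ℕ) where
  toFun : Fin q → ℝ → ℝ
  measurable : ∀ i, Measurable (toFun i)
  mem_I01 : ∀ i x, x ∈ I01 → toFun i x ∈ I01
  sum_one : ∀ x ∈ I01, ∑ i, toFun i x = 1

/-- Energy of a fractional partition with respect to a graphon `W` and matrix `J`. -/
def energy {q : ℕ} (W : ℝ → ℝ → ℝ) (J : Matrix (Fin q) (Fin q) ℝ)
    (ρ : FracPartition q) : ℝ :=
  - ∑ i, ∑ j, J i j * ∫ x in I01, ∫ y in I01, ρ.toFun i x * ρ.toFun j y * W x y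

/-- `a` is a probability distribution on `Fin q`. -/
def IsDist {q : ℕ} (a : Fin q → ℝ) : Prop :=
  (∀ i, 0 ≤ a i) ∧ ∑ i, a i = 1

/-- Microcanonical ground state energy. -/
def mgse {q : ℕ} (W : ℝ → ℝ → ℝ) (J : Matrix (Fin q) (Fin q) ℝ) (a : Fin q → ℝ) : ℝ :=
  sInf {e | ∃ ρ : FracPartition q, (∀ i, (∫ x in I01, ρ.toFun i x) = a i) ∧ e = energy W J ρ}

/-- General lower threshold ground state energy with threshold vector `x`. -/
def ltgseV {q : ℕ} (W : ℝ → ℝ → ℝ) (J : Matrix (Fin q) (Fin q) ℝ) (x : Fin q → ℝ) : ℝ :=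
  sInf {e | ∃ a : Fin q → ℝ, IsDist a ∧ (∀ i, x i ≤ a i) ∧ e = mgse W J a}

/-- Homogeneous lower threshold ground state energy with scalar threshold `c`. -/
def ltgse {q : ℕ} (W : ℝ → ℝ → ℝ) (J : Matrix (Fin q) (Fin q) ℝ) (c : ℝ) : ℝ :=
  ltgseV W J (fun _ => c)

/-- Unrestricted ground state energy. -/
def gse {q : ℕ} (W : ℝ → ℝ → ℝ) (J : Matrix (Fin q) (Fin q) ℝ) : ℝ :=
  sInf {e | ∃ ρ : FracPartition q, e = energy W J ρ}

/-- `W` is a graphon: a bounded symmetric measurable function. -/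
def IsGraphon (W : ℝ → ℝ → ℝ) : Prop :=
  Measurable (Function.uncurry W) ∧ (∀ x y, W x y = W y x) ∧ ∃ M, ∀ x y, |W x y| ≤ M

/-!
Let `ρ` have colour masses `b`. Keeping the fraction `min (a i) (b i) / b i` of each `ρ i` frees
the mass `1 - ∑ i, min (a i) (b i) = ‖a - b‖₁ / 2`; handing it out to the colours in proportion to
their deficits `a i - min (a i) (b i)` gives a partition `σ` with masses `a` and
`∑ i, ‖σ i - ρ i‖₁ ≤ ‖a - b‖₁`. Since `ρ i ⊗ ρ j - σ i ⊗ σ j = (ρ i - σ i) ⊗ ρ j + σ i ⊗ (ρ j - σ j)`,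
and the masses of `ρ` and `σ` both sum to `1`, the energy moves by at most
`2 ‖W‖∞ ‖J‖∞ ∑ i, ‖σ i - ρ i‖₁`. Hence `E_a ≤ E_b + 2 ‖a - b‖₁ ‖W‖∞ ‖J‖∞`, and symmetrically.
-/

section KernelForm

variable {α : Type*} [MeasurableSpace α] {μ : Measure α}
  {W : α → α → ℝ} {M : ℝ} {f g f' g' : α → ℝ}

def kernelForm (μ : Measure α) (W : α → α → ℝ) (f g : α → ℝ) : ℝ :=
  ∫ x, ∫ y, f x * g y * W x y ∂μ ∂μ

lemma integrable_kernelForm_integrand (hW : Measurable (Function.uncurry W))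
    (hWb : ∀ x y, |W x y| ≤ M) (hf : Integrable f μ) (hg : Integrable g μ) :
    Integrable (fun z : α × α => f z.1 * g z.2 * W z.1 z.2) (μ.prod μ) :=
  (hf.mul_prod hg).mul_bdd hW.aestronglyMeasurable
    (.of_forall fun z => by simpa only [Real.norm_eq_abs] using hWb z.1 z.2)

variable [SFinite μ]

lemma kernelForm_eq_integral_prod (hW : Measurable (Function.uncurry W))
    (hWb : ∀ x y, |W x y| ≤ M) (hf : Integrable f μ) (hg : Integrable g μ) :
    kernelForm μ W f g = ∫ z, f z.1 * g z.2 * W z.1 z.2 ∂μ.prod μ :=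
  (integral_prod _ (integrable_kernelForm_integrand hW hWb hf hg)).symm

lemma kernelForm_sub_kernelForm (hW : Measurable (Function.uncurry W))
    (hWb : ∀ x y, |W x y| ≤ M) (hf : Integrable f μ) (hg : Integrable g μ)
    (hf' : Integrable f' μ) (hg' : Integrable g' μ) :
    kernelForm μ W f g - kernelForm μ W f' g' =
      kernelForm μ W (f - f') g + kernelForm μ W f' (g - g') := by
  simp only [kernelForm_eq_integral_prod hW hWb, hf, hg, hf', hg', hf.sub hf', hg.sub hg']
  rw [← integral_sub (integrable_kernelForm_integrand hW hWb hf hg)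
      (integrable_kernelForm_integrand hW hWb hf' hg'),
    ← integral_add (integrable_kernelForm_integrand hW hWb (hf.sub hf') hg)
      (integrable_kernelForm_integrand hW hWb hf' (hg.sub hg'))]
  congr 1 with z
  simp only [Pi.sub_apply]
  ring

lemma abs_kernelForm_le (hW : Measurable (Function.uncurry W))
    (hWb : ∀ x y, |W x y| ≤ M) (hf : Integrable f μ) (hg : Integrable g μ) :
    |kernelForm μ W f g| ≤ M * ((∫ x, |f x| ∂μ) * ∫ y, |g y| ∂μ) := by
  rw [kernelForm_eq_integral_prod hW hWb hf hg,
    ← integral_prod_mul (μ := μ) (ν := μ) (fun x => |f x|) (fun y => |g y|), ← integral_const_mul,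
    ← Real.norm_eq_abs]
  refine norm_integral_le_of_norm_le ((hf.abs.mul_prod hg.abs).const_mul M) (.of_forall fun z => ?_)
  rw [Real.norm_eq_abs, abs_mul, abs_mul, mul_comm M]
  exact mul_le_mul_of_nonneg_left (hWb z.1 z.2) (by positivity)

end KernelForm

lemma IsDist.le_one {q : ℕ} {a : Fin q → ℝ} (ha : IsDist a) (i : Fin q) : a i ≤ 1 :=
  (Finset.single_le_sum (fun j _ => ha.1 j) (Finset.mem_univ i)).trans_eq ha.2

lemma IsDist.nonempty {q : ℕ} {a : Fin q → ℝ} (ha : IsDist a) : Nonempty (Fin q) := by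
  by_contra h
  rw [not_nonempty_iff] at h
  simp [IsDist] at ha

instance : IsProbabilityMeasure (volume.restrict I01) :=
  ⟨by simp [I01, Real.volume_Icc]⟩

lemma ae_mem_I01 : ∀ᵐ x ∂volume.restrict I01, x ∈ I01 :=
  ae_restrict_mem measurableSet_Icc

namespace FracPartition

variable {q : ℕ} (ρ σ : FracPartition q) {c e : Fin q → ℝ}

lemma nonneg {i : Fin q} {x : ℝ} (hx : x ∈ I01) : 0 ≤ ρ.toFun i x := (ρ.mem_I01 i x hx).1

lemma ae_nonneg (i : Fin q) : 0 ≤ᵐ[volume.restrict I01] ρ.toFun i := by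
  filter_upwards [ae_mem_I01] with x hx
  exact ρ.nonneg hx

lemma integrable (i : Fin q) : Integrable (ρ.toFun i) (volume.restrict I01) := by
  refine .of_bound (ρ.measurable i).aestronglyMeasurable 1 ?_
  filter_upwards [ae_mem_I01] with x hx
  rw [Real.norm_eq_abs, abs_of_nonneg (ρ.nonneg hx)]
  exact (ρ.mem_I01 i x hx).2

lemma integral_abs (i : Fin q) :
    ∫ x in I01, |ρ.toFun i x| = ∫ x in I01, ρ.toFun i x :=
  integral_congr_ae ((ρ.ae_nonneg i).mono fun _ hx => abs_of_nonneg hx)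

lemma sum_integral : ∑ i, ∫ x in I01, ρ.toFun i x = 1 := by
  rw [← integral_finsetSum _ fun i _ => ρ.integrable i]
  have hsum : (fun x => ∑ i, ρ.toFun i x) =ᵐ[volume.restrict I01] fun _ => 1 := by
    filter_upwards [ae_mem_I01] with x hx
    exact ρ.sum_one x hx
  simp [integral_congr_ae hsum]

lemma sum_integral_abs : ∑ i, ∫ x in I01, |ρ.toFun i x| = 1 := by
  simp only [integral_abs, sum_integral]

def l1dist : ℝ := ∑ i, ∫ x in I01, |ρ.toFun i x - σ.toFun i x|

def const {b : Fin q → ℝ} (hb : IsDist b) : FracPartition q where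
  toFun i _ := b i
  measurable _ := measurable_const
  mem_I01 i _ _ := ⟨hb.1 i, hb.le_one i⟩
  sum_one _ _ := hb.2

lemma sum_mul_le_one (hc : ∀ k, c k ≤ 1) {x : ℝ} (hx : x ∈ I01) :
    ∑ k, c k * ρ.toFun k x ≤ 1 :=
  (Finset.sum_le_sum fun k _ => mul_le_of_le_one_left (ρ.nonneg hx) (hc k)).trans_eq
    (ρ.sum_one x hx)

def reassign (hc : ∀ i, c i ∈ I01) (he : IsDist e) : FracPartition q where
  toFun i x := c i * ρ.toFun i x + e i * (1 - ∑ k, c k * ρ.toFun k x)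
  measurable i := by
    have := ρ.measurable
    fun_prop
  mem_I01 i x hx := by
    have hfree := sub_nonneg.2 (ρ.sum_mul_le_one (fun k => (hc k).2) hx)
    have hkept : ∀ k, 0 ≤ c k * ρ.toFun k x := fun k => mul_nonneg (hc k).1 (ρ.nonneg hx)
    refine ⟨add_nonneg (hkept i) (mul_nonneg (he.1 i) hfree), ?_⟩
    calc c i * ρ.toFun i x + e i * (1 - ∑ k, c k * ρ.toFun k x)
        ≤ ∑ k, c k * ρ.toFun k x + 1 * (1 - ∑ k, c k * ρ.toFun k x) :=
          add_le_add (Finset.single_le_sum (fun k _ => hkept k) (Finset.mem_univ i))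
            (mul_le_mul_of_nonneg_right (he.le_one i) hfree)
      _ = 1 := by ring
  sum_one x hx := by
    rw [Finset.sum_add_distrib, ← Finset.sum_mul, he.2]
    ring

lemma integral_reassign (hc : ∀ i, c i ∈ I01) (he : IsDist e) (i : Fin q) :
    ∫ x in I01, (ρ.reassign hc he).toFun i x =
      c i * (∫ x in I01, ρ.toFun i x) + e i * (1 - ∑ k, c k * ∫ x in I01, ρ.toFun k x) := by
  have hkept : ∀ k, Integrable (fun x => c k * ρ.toFun k x) (volume.restrict I01) :=
    fun k => (ρ.integrable k).const_mul (c k)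
  have hsum := integrable_finsetSum Finset.univ fun k _ => hkept k
  have hfree : Integrable (fun x => 1 - ∑ k, c k * ρ.toFun k x) (volume.restrict I01) :=
    (integrable_const 1).sub hsum
  simp only [reassign]
  rw [integral_add (hkept i) (hfree.const_mul _), integral_const_mul, integral_const_mul,
    integral_sub (integrable_const 1) hsum, integral_finsetSum _ fun k _ => hkept k]
  simp only [integral_const_mul, integral_const, smul_eq_mul, probReal_univ, mul_one]

lemma abs_sub_reassign_le (hc : ∀ i, c i ∈ I01) (he : IsDist e) {x : ℝ} (hx : x ∈ I01)
    (i : Fin q) :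
    |ρ.toFun i x - (ρ.reassign hc he).toFun i x| ≤
      (ρ.reassign hc he).toFun i x + (1 - 2 * c i) * ρ.toFun i x := by
  have hgained := mul_nonneg (he.1 i) (sub_nonneg.2 (ρ.sum_mul_le_one (fun k => (hc k).2) hx))
  have hlost := mul_nonneg (sub_nonneg.2 (hc i).2) (ρ.nonneg (i := i) hx)
  simp only [reassign]
  rw [abs_le]
  constructor <;> linarith

lemma l1dist_reassign_le (hc : ∀ i, c i ∈ I01) (he : IsDist e) :
    ρ.l1dist (ρ.reassign hc he) ≤ 2 * (1 - ∑ k, c k * ∫ x in I01, ρ.toFun k x) := by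
  set σ := ρ.reassign hc he
  calc ρ.l1dist σ
      ≤ ∑ i, ((∫ x in I01, σ.toFun i x) + (1 - 2 * c i) * ∫ x in I01, ρ.toFun i x) := by
        refine Finset.sum_le_sum fun i _ => ?_
        rw [← integral_const_mul, ← integral_add (σ.integrable i) ((ρ.integrable i).const_mul _)]
        refine integral_mono_ae ((ρ.integrable i).sub (σ.integrable i)).abs
          ((σ.integrable i).add ((ρ.integrable i).const_mul _)) ?_
        filter_upwards [ae_mem_I01] with x hx
        exact ρ.abs_sub_reassign_le hc he hx i
    _ = 2 * (1 - ∑ k, c k * ∫ x in I01, ρ.toFun k x) := by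
        simp only [Finset.sum_add_distrib, sub_mul, Finset.sum_sub_distrib, one_mul, mul_assoc,
          ← Finset.mul_sum, σ.sum_integral, ρ.sum_integral]
        ring

lemma exists_integral_eq_l1dist_le {a b : Fin q → ℝ} (ha : IsDist a) (hb : IsDist b)
    (hρ : ∀ i, ∫ x in I01, ρ.toFun i x = b i) :
    ∃ σ : FracPartition q, (∀ i, ∫ x in I01, σ.toFun i x = a i) ∧
      ρ.l1dist σ ≤ ∑ i, |a i - b i| := by
  set m := fun i => min (a i) (b i)
  set S := 1 - ∑ i, m i
  have hS : ∑ i, (a i - m i) = S := by rw [Finset.sum_sub_distrib, ha.2]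
  have hdist : ∑ i, |a i - b i| = 2 * S := by
    have habs : ∀ i, |a i - b i| = a i + b i - 2 * m i := fun i => by
      rcases le_total (a i) (b i) with h | h
      · rw [abs_of_nonpos (sub_nonpos.2 h)]; simp only [m, min_eq_left h]; ring
      · rw [abs_of_nonneg (sub_nonneg.2 h)]; simp only [m, min_eq_right h]; ring
    simp only [habs, Finset.sum_sub_distrib, Finset.sum_add_distrib, ← Finset.mul_sum, ha.2, hb.2]
    ring
  rcases eq_or_ne S 0 with hS0 | hS0
  · obtain rfl : a = b := funext fun i => sub_eq_zero.1 <| abs_eq_zero.1 <|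
      (Finset.sum_eq_zero_iff_of_nonneg fun i _ => abs_nonneg _).1 (by rw [hdist, hS0, mul_zero])
        i (Finset.mem_univ i)
    exact ⟨ρ, hρ, by simp [l1dist]⟩
  -- `m i / b i` is the junk value `0` when `b i = 0`; harmless, as then `m i = 0` too.
  set c := fun i => m i / b i
  have hcb : ∀ i, c i * b i = m i := fun i => by
    rcases eq_or_ne (b i) 0 with h | h
    · simp [c, m, h, min_eq_right (ha.1 i)]
    · exact div_mul_cancel₀ _ h
  have hc : ∀ i, c i ∈ I01 := fun i =>
    ⟨div_nonneg (le_min (ha.1 i) (hb.1 i)) (hb.1 i), div_le_one_of_le₀ (min_le_right _ _) (hb.1 i)⟩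
  have he : IsDist fun i => (a i - m i) / S :=
    ⟨fun i => div_nonneg (sub_nonneg.2 (min_le_left _ _))
        (hS ▸ Finset.sum_nonneg fun j _ => sub_nonneg.2 (min_le_left _ _)),
      by rw [← Finset.sum_div, hS, div_self hS0]⟩
  refine ⟨ρ.reassign hc he, fun i => ?_, ?_⟩
  · simp only [integral_reassign, hρ, hcb]
    rw [div_mul_cancel₀ _ hS0]
    ring
  · refine (ρ.l1dist_reassign_le hc he).trans_eq ?_
    simp only [hρ, hcb, hdist, S]

end FracPartition

section Energy

variable {q : ℕ} {W : ℝ → ℝ → ℝ} {J : Matrix (Fin q) (Fin q) ℝ} {Wmax Jmax : ℝ}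

lemma energy_eq_sum_kernelForm (ρ : FracPartition q) :
    energy W J ρ = -∑ i, ∑ j, J i j *
      kernelForm (volume.restrict I01) W (ρ.toFun i) (ρ.toFun j) := rfl

variable (hW : Measurable (Function.uncurry W)) (hWb : ∀ x y, |W x y| ≤ Wmax)
  (hJb : ∀ i j, |J i j| ≤ Jmax)
include hW hWb hJb

lemma abs_energy_le (ρ : FracPartition q) : |energy W J ρ| ≤ Wmax * Jmax := by
  set m := fun i => ∫ x in I01, |ρ.toFun i x|
  calc |energy W J ρ|
      ≤ ∑ i, ∑ j, |J i j| * |kernelForm (volume.restrict I01) W (ρ.toFun i) (ρ.toFun j)| := by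
        rw [energy_eq_sum_kernelForm, abs_neg]
        refine (Finset.abs_sum_le_sum_abs _ _).trans (Finset.sum_le_sum fun i _ => ?_)
        simpa only [abs_mul] using Finset.abs_sum_le_sum_abs
          (fun j => J i j * kernelForm (volume.restrict I01) W (ρ.toFun i) (ρ.toFun j)) _
    _ ≤ ∑ i, ∑ j, Jmax * (Wmax * (m i * m j)) := by
        refine Finset.sum_le_sum fun i _ => Finset.sum_le_sum fun j _ => ?_
        exact mul_le_mul (hJb i j) (abs_kernelForm_le hW hWb (ρ.integrable i) (ρ.integrable j))
          (abs_nonneg _) ((abs_nonneg _).trans (hJb i j))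
    _ = Wmax * Jmax * ((∑ i, m i) * ∑ j, m j) := by
        rw [Finset.sum_mul_sum, Finset.mul_sum]
        refine Finset.sum_congr rfl fun i _ => ?_
        rw [Finset.mul_sum]
        exact Finset.sum_congr rfl fun j _ => by ring
    _ = Wmax * Jmax := by simp only [m, ρ.sum_integral_abs, mul_one]

lemma abs_energy_sub_le (ρ σ : FracPartition q) :
    |energy W J σ - energy W J ρ| ≤ 2 * ρ.l1dist σ * Wmax * Jmax := by
  set K := kernelForm (volume.restrict I01) W
  set d := fun i => ∫ x in I01, |ρ.toFun i x - σ.toFun i x|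
  set m := fun i => ∫ x in I01, |ρ.toFun i x|
  set m' := fun i => ∫ x in I01, |σ.toFun i x|
  have hsplit : energy W J σ - energy W J ρ = ∑ i, ∑ j, J i j *
      (K (ρ.toFun i - σ.toFun i) (ρ.toFun j) + K (σ.toFun i) (ρ.toFun j - σ.toFun j)) := by
    simp only [energy_eq_sum_kernelForm, neg_sub_neg, ← Finset.sum_sub_distrib, ← mul_sub]
    refine Finset.sum_congr rfl fun i _ => Finset.sum_congr rfl fun j _ => ?_
    rw [kernelForm_sub_kernelForm hW hWb (ρ.integrable i) (ρ.integrable j) (σ.integrable i)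
      (σ.integrable j)]
  calc |energy W J σ - energy W J ρ|
      ≤ ∑ i, ∑ j, Jmax * (Wmax * (d i * m j) + Wmax * (m' i * d j)) := by
        rw [hsplit]
        refine (Finset.abs_sum_le_sum_abs _ _).trans (Finset.sum_le_sum fun i _ => ?_)
        refine (Finset.abs_sum_le_sum_abs _ _).trans (Finset.sum_le_sum fun j _ => ?_)
        rw [abs_mul]
        refine mul_le_mul (hJb i j) ((abs_add_le _ _).trans (add_le_add ?_ ?_)) (abs_nonneg _)
          ((abs_nonneg _).trans (hJb i j))
        · exact abs_kernelForm_le hW hWb ((ρ.integrable i).sub (σ.integrable i)) (ρ.integrable j)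
        · exact abs_kernelForm_le hW hWb (σ.integrable i) ((ρ.integrable j).sub (σ.integrable j))
    _ = Wmax * Jmax * ((∑ i, d i) * (∑ j, m j) + (∑ i, m' i) * ∑ j, d j) := by
        rw [Finset.sum_mul_sum, Finset.sum_mul_sum, ← Finset.sum_add_distrib, Finset.mul_sum]
        refine Finset.sum_congr rfl fun i _ => ?_
        rw [← Finset.sum_add_distrib, Finset.mul_sum]
        exact Finset.sum_congr rfl fun j _ => by ring
    _ = 2 * ρ.l1dist σ * Wmax * Jmax := by
        simp only [m, m', ρ.sum_integral_abs, σ.sum_integral_abs, FracPartition.l1dist, d]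
        ring

lemma mgse_le_add {a b : Fin q → ℝ} (ha : IsDist a) (hb : IsDist b) :
    mgse W J a ≤ mgse W J b + 2 * (∑ i, |a i - b i|) * Wmax * Jmax := by
  have hWmax : 0 ≤ Wmax := (abs_nonneg _).trans (hWb 0 0)
  obtain ⟨i₀⟩ := ha.nonempty
  have hJmax : 0 ≤ Jmax := (abs_nonneg _).trans (hJb i₀ i₀)
  have hbdd : BddBelow {e | ∃ ρ : FracPartition q,
      (∀ i, ∫ x in I01, ρ.toFun i x = a i) ∧ e = energy W J ρ} := by
    refine ⟨-(Wmax * Jmax), ?_⟩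
    rintro _ ⟨ρ, -, rfl⟩
    exact neg_le_of_abs_le (abs_energy_le hW hWb hJb ρ)
  rw [← sub_le_iff_le_add]
  refine le_csInf ⟨_, FracPartition.const hb, fun i => by simp [FracPartition.const], rfl⟩ ?_
  rintro _ ⟨ρ, hρ, rfl⟩
  obtain ⟨σ, hσ, hdist⟩ := ρ.exists_integral_eq_l1dist_le ha hb hρ
  have hmgse : mgse W J a ≤ energy W J σ := csInf_le hbdd ⟨σ, hσ, rfl⟩
  have henergy := (le_abs_self _).trans (abs_energy_sub_le hW hWb hJb ρ σ)
  have hmove : 2 * ρ.l1dist σ * Wmax * Jmax ≤ 2 * (∑ i, |a i - b i|) * Wmax * Jmax := by gcongr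
  linarith

end Energy

theorem stmt2_general (q : ℕ) (J : Matrix (Fin q) (Fin q) ℝ)
    (W : ℝ → ℝ → ℝ) (hW : IsGraphon W) (Wmax Jmax : ℝ)
    (hWb : ∀ x y, |W x y| ≤ Wmax) (hJb : ∀ i j, |J i j| ≤ Jmax)
    (a b : Fin q → ℝ) (ha : IsDist a) (hb : IsDist b) :
    |mgse W J a - mgse W J b| ≤ 2 * (∑ i, |a i - b i|) * Wmax * Jmax := by
  have hab := mgse_le_add hW.1 hWb hJb ha hb
  have hba := mgse_le_add hW.1 hWb hJb hb ha
  simp only [abs_sub_comm (b _)] at hba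
  rw [abs_sub_le_iff]
  constructor <;> linarith

theorem stmt2 (q : ℕ) (hq : 1 ≤ q) (J : Matrix (Fin q) (Fin q) ℝ) (hJ : J.IsSymm)
    (W : ℝ → ℝ → ℝ) (hW : IsGraphon W) (Wmax Jmax : ℝ)
    (hWb : ∀ x y, |W x y| ≤ Wmax) (hJb : ∀ i j, |J i j| ≤ Jmax)
    (a b : Fin q → ℝ) (ha : IsDist a) (hb : IsDist b) :
    |mgse W J a - mgse W J b| ≤ 2 * (∑ i, |a i - b i|) * Wmax * Jmax :=
  stmt2_general q J W hW Wmax Jmax hWb hJb a b ha hb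
end
end

section
/- Let U, W be graphons and φ a measure-preserving bijection of [0,1], with W^φ(x,y) = W(φ(x), φ(y)). Then for every q-fractional partition ρ and symmetric q×q matrix J, |E_ρ(U,J) − E_ρ(W^φ,J)| ≤ q²·‖J‖_∞·‖U − W^φ‖_□, where ‖·‖_□ is the cut norm. -/
open MeasureTheory Filter

noncomputable section

/-- The cut norm of a kernel on `[0,1]²`. -/
def cutNorm (W : ℝ → ℝ → ℝ) : ℝ :=
  sSup {r | ∃ f g : ℝ → ℝ, Measurable f ∧ Measurable g ∧
    (∀ x, f x ∈ I01) ∧ (∀ x, g x ∈ I01) ∧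
    r = |∫ x in I01, ∫ y in I01, W x y * f x * g y|}

/-- The cut distance between two graphons. -/
def cutDist (U W : ℝ → ℝ → ℝ) : ℝ :=
  sInf {r | ∃ φ : ℝ → ℝ, Measurable φ ∧ Set.BijOn φ I01 I01 ∧
    MeasurePreserving φ (volume.restrict I01) (volume.restrict I01) ∧
    r = cutNorm (fun x y => U x y - W (φ x) (φ y))}


/-! The energy difference is `-∑ J i j ∫∫ ρ i x ρ j y (U - W^φ)(x, y)`. Each double integral is
a cut-norm test of `U - W^φ` against the `[0,1]`-valued weights `ρ i`, `ρ j`, so each of the `q²`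
terms is at most `Jmax * ‖U - W^φ‖_□`. -/

open Set Function

instance inst_s6 : IsProbabilityMeasure (volume.restrict I01) :=
  ⟨by simp [I01, Real.volume_Icc]⟩

lemma abs_setIntegral_I01_le {h : ℝ → ℝ} {C : ℝ} (hC : ∀ x, |h x| ≤ C) :
    |∫ x in I01, h x| ≤ C := by
  simpa using norm_integral_le_of_norm_le_const (μ := volume.restrict I01) (f := h)
    (Eventually.of_forall hC)

lemma abs_mul_mul_le_of_mem_I01 {a b v M : ℝ} (ha : a ∈ I01) (hb : b ∈ I01) (hv : |v| ≤ M) :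
    |a * b * v| ≤ M := by
  obtain ⟨ha0, ha1⟩ := ha
  obtain ⟨hb0, hb1⟩ := hb
  rw [abs_mul, abs_mul, abs_of_nonneg ha0, abs_of_nonneg hb0]
  have hab : a * b ≤ 1 := mul_le_one₀ ha1 hb0 hb1
  nlinarith [abs_nonneg v, mul_nonneg ha0 hb0]

section Kernel

variable {α β : Type*} [MeasurableSpace α] [MeasurableSpace β]
  {μ : Measure α} {ν : Measure β} [IsFiniteMeasure μ] [IsFiniteMeasure ν]
  {f : α → ℝ} {g : β → ℝ}

lemma integrable_mul_kernel {V : α → β → ℝ} {M : ℝ} (hf : Measurable f) (hg : Measurable g)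
    (hf01 : ∀ x, f x ∈ I01) (hg01 : ∀ y, g y ∈ I01)
    (hV : Measurable (uncurry V)) (hM : ∀ x y, |V x y| ≤ M) :
    Integrable (fun p : α × β => f p.1 * g p.2 * V p.1 p.2) (μ.prod ν) :=
  Integrable.of_bound
    (((hf.comp measurable_fst).mul (hg.comp measurable_snd)).mul hV).aestronglyMeasurable M
    (Eventually.of_forall fun p => abs_mul_mul_le_of_mem_I01 (hf01 p.1) (hg01 p.2) (hM p.1 p.2))

lemma integral_integral_mul_kernel_sub {U V : α → β → ℝ} {MU MV : ℝ}
    (hf : Measurable f) (hg : Measurable g) (hf01 : ∀ x, f x ∈ I01) (hg01 : ∀ y, g y ∈ I01)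
    (hU : Measurable (uncurry U)) (hMU : ∀ x y, |U x y| ≤ MU)
    (hV : Measurable (uncurry V)) (hMV : ∀ x y, |V x y| ≤ MV) :
    (∫ x, ∫ y, f x * g y * U x y ∂ν ∂μ) - ∫ x, ∫ y, f x * g y * V x y ∂ν ∂μ
      = ∫ x, ∫ y, f x * g y * (U x y - V x y) ∂ν ∂μ := by
  rw [← integral_integral_sub (integrable_mul_kernel hf hg hf01 hg01 hU hMU)
    (integrable_mul_kernel hf hg hf01 hg01 hV hMV)]
  simp only [mul_sub]

end Kernel

lemma abs_integral_mul_kernel_le_cutNorm {D : ℝ → ℝ → ℝ} {M : ℝ} (hM : ∀ x y, |D x y| ≤ M)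
    {f g : ℝ → ℝ} (hf : Measurable f) (hg : Measurable g)
    (hf01 : ∀ x, f x ∈ I01) (hg01 : ∀ y, g y ∈ I01) :
    |∫ x in I01, ∫ y in I01, f x * g y * D x y| ≤ cutNorm D := by
  have hbound : ∀ f g : ℝ → ℝ, (∀ x, f x ∈ I01) → (∀ y, g y ∈ I01) →
      |∫ x in I01, ∫ y in I01, D x y * f x * g y| ≤ M := fun f g hf01 hg01 =>
    abs_setIntegral_I01_le fun x => abs_setIntegral_I01_le fun y => by
      rw [show D x y * f x * g y = f x * g y * D x y by ring]
      exact abs_mul_mul_le_of_mem_I01 (hf01 x) (hg01 y) (hM x y)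
  refine le_csSup ⟨M, ?_⟩ ⟨f, g, hf, hg, hf01, hg01, ?_⟩
  · rintro r ⟨f, g, -, -, hf01, hg01, rfl⟩
    exact hbound f g hf01 hg01
  · simp only [mul_comm, mul_left_comm]

/-- A fractional partition is only constrained on `[0,1]`; clamping makes it `[0,1]`-valued
everywhere, as the cut norm requires, without changing any integral over `[0,1]`. -/
def clampI01 (t : ℝ) : ℝ := projIcc 0 1 zero_le_one t

lemma clampI01_mem (t : ℝ) : clampI01 t ∈ I01 := (projIcc 0 1 zero_le_one t).2

lemma clampI01_of_mem {t : ℝ} (ht : t ∈ I01) : clampI01 t = t := by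
  simp [clampI01, projIcc_of_mem _ ht]

lemma measurable_clampI01 : Measurable clampI01 :=
  (continuous_projIcc (a := (0 : ℝ)) (b := 1) (h := zero_le_one)).subtype_val.measurable

lemma energy_eq_clampI01 {q : ℕ} (W : ℝ → ℝ → ℝ) (J : Matrix (Fin q) (Fin q) ℝ)
    (ρ : FracPartition q) :
    energy W J ρ = -∑ i, ∑ j, J i j * ∫ x in I01, ∫ y in I01,
      clampI01 (ρ.toFun i x) * clampI01 (ρ.toFun j y) * W x y := by
  unfold energy
  have hI : MeasurableSet I01 := measurableSet_Icc
  congr! 4 with i - j -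
  refine setIntegral_congr_fun hI fun x hx => ?_
  refine setIntegral_congr_fun hI fun y hy => ?_
  rw [clampI01_of_mem (ρ.mem_I01 i x hx), clampI01_of_mem (ρ.mem_I01 j y hy)]

lemma abs_sum_sum_mul_sub_le {q : ℕ} (J a b : Fin q → Fin q → ℝ) {Jmax c : ℝ}
    (hJ : ∀ i j, |J i j| ≤ Jmax) (hab : ∀ i j, |a i j - b i j| ≤ c) :
    |∑ i, ∑ j, J i j * a i j - ∑ i, ∑ j, J i j * b i j| ≤ (q : ℝ) ^ 2 * Jmax * c :=
  calc |∑ i, ∑ j, J i j * a i j - ∑ i, ∑ j, J i j * b i j|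
      = |∑ i, ∑ j, J i j * (a i j - b i j)| := by
        simp only [mul_sub, Finset.sum_sub_distrib]
    _ ≤ ∑ i, ∑ j, |J i j * (a i j - b i j)| :=
        (Finset.abs_sum_le_sum_abs _ _).trans
          (Finset.sum_le_sum fun i _ => Finset.abs_sum_le_sum_abs _ _)
    _ ≤ ∑ _i : Fin q, ∑ _j : Fin q, Jmax * c :=
        Finset.sum_le_sum fun i _ => Finset.sum_le_sum fun j _ => by
          rw [abs_mul]
          exact mul_le_mul (hJ i j) (hab i j) (abs_nonneg _) ((abs_nonneg _).trans (hJ i j))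
    _ = (q : ℝ) ^ 2 * Jmax * c := by simp; ring

theorem stmt6_general (q : ℕ) (U W : ℝ → ℝ → ℝ) (hU : IsGraphon U) (hW : IsGraphon W)
    (φ : ℝ → ℝ) (hφm : Measurable φ)
    (J : Matrix (Fin q) (Fin q) ℝ)
    (Jmax : ℝ) (hJb : ∀ i j, |J i j| ≤ Jmax)
    (ρ : FracPartition q) :
    |energy U J ρ - energy (fun x y => W (φ x) (φ y)) J ρ| ≤
      (q : ℝ) ^ 2 * Jmax * cutNorm (fun x y => U x y - W (φ x) (φ y)) := by
  obtain ⟨hUm, -, MU, hMU⟩ := hU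
  obtain ⟨hWm, -, MW, hMW⟩ := hW
  have hWφm : Measurable (uncurry fun x y => W (φ x) (φ y)) := hWm.comp (hφm.prodMap hφm)
  have hMD : ∀ x y, |U x y - W (φ x) (φ y)| ≤ MU + MW := fun x y =>
    (abs_sub _ _).trans (add_le_add (hMU _ _) (hMW _ _))
  rw [energy_eq_clampI01, energy_eq_clampI01, neg_sub_neg, abs_sub_comm]
  refine abs_sum_sum_mul_sub_le _ _ _ hJb fun i j => ?_
  have hρi : Measurable fun x => clampI01 (ρ.toFun i x) :=
    measurable_clampI01.comp (ρ.measurable i)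
  have hρj : Measurable fun y => clampI01 (ρ.toFun j y) :=
    measurable_clampI01.comp (ρ.measurable j)
  have hρ01 : ∀ k x, clampI01 (ρ.toFun k x) ∈ I01 := fun _ _ => clampI01_mem _
  rw [integral_integral_mul_kernel_sub hρi hρj (hρ01 i) (hρ01 j) hUm hMU hWφm
    fun x y => hMW (φ x) (φ y)]
  exact abs_integral_mul_kernel_le_cutNorm hMD hρi hρj (hρ01 i) (hρ01 j)

theorem stmt6 (q : ℕ) (U W : ℝ → ℝ → ℝ) (hU : IsGraphon U) (hW : IsGraphon W)
    (φ : ℝ → ℝ) (hφm : Measurable φ) (hφbij : Set.BijOn φ I01 I01)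
    (hφmp : MeasurePreserving φ (volume.restrict I01) (volume.restrict I01))
    (J : Matrix (Fin q) (Fin q) ℝ) (hJ : J.IsSymm)
    (Jmax : ℝ) (hJb : ∀ i j, |J i j| ≤ Jmax)
    (ρ : FracPartition q) :
    |energy U J ρ - energy (fun x y => W (φ x) (φ y)) J ρ| ≤
      (q : ℝ) ^ 2 * Jmax * cutNorm (fun x y => U x y - W (φ x) (φ y)) :=
  stmt6_general q U W hU hW φ hφm J Jmax hJb ρ
end
end
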